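/- arXiv:1508.06979 — 2 statements merged into one kernel-verified Lean document; each statement's English description precedes it below -/
import Mathlib

section
/- Let (v,x) ∈ V × N with normal basis v_{i,j} of type (α;β), and suppose α_l = α_{l+1} for some l < ℓ(α). Let V_2 be the span of {v_{l,j} : all j} and let V_1 be the span of all v_{i,j} with i ≠ l, l+1 together with the vectors v_{l,j} + v_{l+1,j} for 1 ≤ j ≤ α_{l+1} + β_{l+1}. Then V = V_1 ⊕ V_2, both V_1 and V_2 are nonzero, both are x-stable, and v ∈ V_1. -/
/-!
Replacing each basis vector `v_{l+1,j}` by `v_{l,j} + v_{l+1,j}` is a unitriangular change of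
basis, so `V₁` is the graph, over the span of the rows `i ≠ l`, of a linear map into `V₂`, and
graphs of such maps are complements of `V₂`. Both summands are spanned by families on which `x`
acts by `j ↦ j - 1` (or by `0`), so they are `x`-stable. Finally, since `α l = α (l + 1)`, the
summands of `v` coming from rows `l` and `l + 1` add up to one of the generators of `V₁`.
-/

open Submodule Set

namespace Module.Basis

variable {ι R M : Type*} [CommRing R] [AddCommGroup M] [Module R M]

/-- The projection `b i ↦ b i` (`i ∈ s`), `b i ↦ -c i` (`i ∉ s`) is the identity on the second
summand and kills the first. -/
theorem isCompl_span_image_add (b : Basis ι R M) (s : Set ι) (c : ι → M)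
    (hc : ∀ i ∉ s, c i ∈ span R (b '' s)) :
    IsCompl (span R ((fun i => b i + c i) '' sᶜ)) (span R (b '' s)) := by
  classical
  set π : M →ₗ[R] M := b.constr R fun i => if i ∈ s then b i else -c i
  have hπ_id : span R (b '' s) ≤ LinearMap.eqLocus π LinearMap.id := by
    rw [span_le]
    rintro _ ⟨i, hi, rfl⟩
    simp [π, hi]
  have hπ_zero : span R ((fun i => b i + c i) '' sᶜ) ≤ LinearMap.ker π := by
    rw [span_le]
    rintro _ ⟨i, hi : i ∉ s, rfl⟩
    have hci : π (c i) = c i := hπ_id (hc i hi)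
    simp [π, hi, hci]
  constructor
  · rw [disjoint_def]
    intro w h₁ h₂
    exact (hπ_id h₂).symm.trans (hπ_zero h₁)
  · rw [codisjoint_iff, eq_top_iff, ← b.span_eq, span_le]
    rintro _ ⟨i, rfl⟩
    by_cases hi : i ∈ s
    · exact mem_sup_right (subset_span ⟨i, hi, rfl⟩)
    · rw [← add_sub_cancel_right (b i) (c i)]
      exact sub_mem (mem_sup_left (subset_span ⟨i, hi, rfl⟩)) (mem_sup_right (hc i hi))

theorem isCompl_span_pairedRows {κ : ι → Type*} (b : Basis (Σ i, κ i) R M) {i₀ i₁ : ι}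
    (hi : i₀ ≠ i₁) (e : κ i₁ → κ i₀) :
    IsCompl
      (span R (b '' (Sigma.fst ⁻¹' {i₀, i₁}ᶜ) ∪ range fun j => b ⟨i₀, e j⟩ + b ⟨i₁, j⟩))
      (span R (b '' (Sigma.fst ⁻¹' {i₀}))) := by
  set c := Function.extend (Sigma.mk i₁) (fun j => b ⟨i₀, e j⟩) 0
  have hc_row : ∀ j, c ⟨i₁, j⟩ = b ⟨i₀, e j⟩ := sigma_mk_injective.extend_apply _ _
  have hc_zero : ∀ p : Σ i, κ i, p.1 ≠ i₁ → c p = 0 := fun p hp =>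
    Function.extend_apply' _ _ _ fun ⟨j, hj⟩ => hp (hj ▸ rfl)
  convert b.isCompl_span_image_add (Sigma.fst ⁻¹' {i₀}) c fun p _ => ?_ using 2
  · ext w
    constructor
    · rintro (⟨p, hp, rfl⟩ | ⟨j, rfl⟩)
      · have hp : p.1 ≠ i₀ ∧ p.1 ≠ i₁ := by simpa using hp
        exact ⟨p, hp.1, by beta_reduce; rw [hc_zero p hp.2, add_zero]⟩
      · exact ⟨⟨i₁, j⟩, hi.symm, by beta_reduce; rw [hc_row, add_comm]⟩
    · rintro ⟨⟨i, j⟩, hi₀ : i ≠ i₀, rfl⟩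
      rcases eq_or_ne i i₁ with rfl | hi₁
      · exact Or.inr ⟨j, by beta_reduce; rw [hc_row, add_comm]⟩
      · exact Or.inl ⟨⟨i, j⟩, by simp [hi₀, hi₁], by beta_reduce; rw [hc_zero _ hi₁, add_zero]⟩
  · obtain ⟨i, j⟩ := p
    rcases eq_or_ne i i₁ with rfl | hi₁
    · rw [hc_row]
      exact subset_span ⟨_, rfl, rfl⟩
    · rw [hc_zero _ hi₁]
      exact zero_mem _

theorem span_image_ne_top [Nontrivial R] (b : Basis ι R M) {s : Set ι} {i : ι} (hi : i ∉ s) :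
    span R (b '' s) ≠ ⊤ := fun h =>
  b.linearIndependent.notMem_span_image hi (h ▸ mem_top)

end Module.Basis

theorem Finset.sum_mem_of_add_mem {ι M S : Type*} [Fintype ι] [DecidableEq ι]
    [AddCommMonoid M] [SetLike S M] [AddSubmonoidClass S M] {p : S} {u : ι → M} {a a' : ι}
    (ha : a ≠ a') (hpair : u a + u a' ∈ p) (hrest : ∀ i, i ≠ a → i ≠ a' → u i ∈ p) :
    ∑ i, u i ∈ p := by
  rw [← Finset.add_sum_erase _ _ (Finset.mem_univ a),
    ← Finset.add_sum_erase _ _ (Finset.mem_erase.2 ⟨ha.symm, Finset.mem_univ a'⟩), ← add_assoc]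
  refine add_mem hpair (sum_mem fun i hi => ?_)
  obtain ⟨hia', hi⟩ := Finset.mem_erase.1 hi
  exact hrest i (Finset.mem_erase.1 hi).1 hia'

theorem Module.End.span_mem_invtSubmodule {R M : Type*} [Semiring R] [AddCommMonoid M]
    [Module R M] {f : Module.End R M} {S : Set M} (h : ∀ w ∈ S, f w ∈ span R S) :
    span R S ∈ f.invtSubmodule :=
  (Module.End.mem_invtSubmodule f).2 (span_le.2 h)

namespace Module.Basis

variable {κ R M : Type*} [Semiring R] [AddCommMonoid M] [Module R M] {n : κ → ℕ}

def IsJordanBasis (b : Basis (Σ i, Fin (n i)) R M) (x : Module.End R M) : Prop :=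
  ∀ p : Σ i, Fin (n i), x (b p) =
    if _ : (p.2 : ℕ) = 0 then 0
    else b ⟨p.1, ⟨(p.2 : ℕ) - 1, lt_of_le_of_lt (Nat.sub_le _ _) p.2.2⟩⟩

variable {b : Basis (Σ i, Fin (n i)) R M} {x : Module.End R M}

theorem IsJordanBasis.span_rows_mem_invtSubmodule (hx : b.IsJordanBasis x) (T : Set κ) :
    span R (b '' (Sigma.fst ⁻¹' T)) ∈ x.invtSubmodule := by
  refine Module.End.span_mem_invtSubmodule ?_
  rintro _ ⟨⟨i, j⟩, hi, rfl⟩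
  rw [hx]
  split_ifs
  · exact zero_mem _
  · exact subset_span ⟨⟨i, ⟨j - 1, by omega⟩⟩, hi, rfl⟩

theorem IsJordanBasis.span_pairedRows_mem_invtSubmodule (hx : b.IsJordanBasis x) {i₀ i₁ : κ}
    (h : n i₁ ≤ n i₀) :
    span R (range fun j => b ⟨i₀, Fin.castLE h j⟩ + b ⟨i₁, j⟩) ∈ x.invtSubmodule := by
  refine Module.End.span_mem_invtSubmodule ?_
  rintro _ ⟨j, rfl⟩
  rw [map_add, hx, hx]
  by_cases hj : (j : ℕ) = 0
  · simp only [Fin.val_castLE, hj, dite_true, add_zero]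
    exact zero_mem _
  · simp only [Fin.val_castLE, hj, dite_false]
    exact subset_span ⟨⟨j - 1, by omega⟩, rfl⟩

end Module.Basis

theorem Module.Basis.sum_top_mem_span_pairedRows {R M : Type*} [Semiring R] [AddCommMonoid M]
    [Module R M] {k : ℕ} {α β : ℕ → ℕ} (b : Basis (Σ i : Fin k, Fin (α i + β i)) R M)
    {i₀ i₁ : Fin k} (hi : i₀ ≠ i₁) (heq : α i₀ = α i₁) (hpos : 0 < α i₁)
    (h : α i₁ + β i₁ ≤ α i₀ + β i₀) :
    (∑ i : Fin k, if h : 0 < α i then b ⟨i, ⟨α i - 1, by omega⟩⟩ else 0) ∈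
      span R (b '' (Sigma.fst ⁻¹' {i₀, i₁}ᶜ) ∪
        range fun j => b ⟨i₀, Fin.castLE h j⟩ + b ⟨i₁, j⟩) := by
  refine Finset.sum_mem_of_add_mem hi ?_ fun i hi₀ hi₁ => ?_
  · rw [dif_pos (heq ▸ hpos), dif_pos hpos]
    have htop : Fin.castLE h ⟨α i₁ - 1, by omega⟩ = ⟨α i₀ - 1, by omega⟩ :=
      Fin.ext (congrArg (· - 1) heq.symm)
    refine subset_span (Or.inr ⟨⟨α i₁ - 1, by omega⟩, ?_⟩)
    beta_reduce
    rw [htop]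
  · split_ifs
    · exact subset_span (Or.inl ⟨_, by simp [hi₀, hi₁], rfl⟩)
    · exact zero_mem _

/-- For a normal basis `b ⟨i,j⟩` of `(v,x)` of type `(α;β)` with
`α l = α (l+1)` (two equal nonzero parts of `α`, rows 0-indexed `l`, `l+1 < k`),
let `V₂` be the span of row `l` and `V₁` the span of the rows `i ≠ l, l+1`
together with the vectors `b ⟨l,j⟩ + b ⟨l+1,j⟩` for `j < α (l+1) + β (l+1)`.
Then `V = V₁ ⊕ V₂`, both summands are nonzero and `x`-stable, and `v ∈ V₁`. -/
theorem decomposition_when_alpha_parts_equal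
    (F : Type) [Field F] (V : Type) [AddCommGroup V] [Module F V]
    (k : ℕ) (α β : ℕ → ℕ) (hα : Antitone α) (hβ : Antitone β)
    (b : Module.Basis (Σ i : Fin k, Fin (α i + β i)) F V)
    (x : Module.End F V)
    (hx : ∀ p : Σ i : Fin k, Fin (α i + β i), x (b p) =
      if _ : (p.2 : ℕ) = 0 then 0
      else b ⟨p.1, ⟨(p.2 : ℕ) - 1, lt_of_le_of_lt (Nat.sub_le _ _) p.2.2⟩⟩)
    (v : V)
    (hv : v = ∑ i : Fin k,
      if h : 0 < α i then b ⟨i, ⟨α i - 1, by omega⟩⟩ else 0)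
    (l : ℕ) (hl : l + 1 < k) (heq : α l = α (l + 1)) (hne : 0 < α (l + 1))
    (V₁ V₂ : Submodule F V)
    (hV₁ : V₁ = Submodule.span F
      ({w : V | ∃ p : Σ i : Fin k, Fin (α i + β i),
          w = b p ∧ (p.1 : ℕ) ≠ l ∧ (p.1 : ℕ) ≠ l + 1}
        ∪ {w : V | ∃ j : Fin (α (l + 1) + β (l + 1)),
          w = b ⟨⟨l, by omega⟩, ⟨(j : ℕ), lt_of_lt_of_le j.2
              (Nat.add_le_add (hα (Nat.le_succ l)) (hβ (Nat.le_succ l)))⟩⟩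
            + b ⟨⟨l + 1, hl⟩, j⟩}))
    (hV₂ : V₂ = Submodule.span F
      (Set.range fun j : Fin (α l + β l) => b ⟨⟨l, by omega⟩, j⟩)) :
    IsCompl V₁ V₂ ∧ V₁ ≠ ⊥ ∧ V₂ ≠ ⊥
    ∧ (∀ w ∈ V₁, x w ∈ V₁) ∧ (∀ w ∈ V₂, x w ∈ V₂) ∧ v ∈ V₁ := by
  have hαβ : α (l + 1) + β (l + 1) ≤ α l + β l :=
    Nat.add_le_add (hα (Nat.le_succ l)) (hβ (Nat.le_succ l))
  set i₀ : Fin k := ⟨l, by omega⟩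
  set i₁ : Fin k := ⟨l + 1, hl⟩
  have hi : i₀ ≠ i₁ := by simp [i₀, i₁, Fin.ext_iff]
  have hV₂' : V₂ = span F (b '' (Sigma.fst ⁻¹' {i₀})) := by
    rw [hV₂, ← range_sigmaMk, ← range_comp]
    rfl
  have hV₁' : V₁ = span F (b '' (Sigma.fst ⁻¹' {i₀, i₁}ᶜ) ∪
      range fun j => b ⟨i₀, Fin.castLE hαβ j⟩ + b ⟨i₁, j⟩) := by
    rw [hV₁]
    congr 1
    ext w
    simp [i₀, i₁, Fin.ext_iff, eq_comm, and_comm]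
    exact Iff.rfl
  have hJ : b.IsJordanBasis x := hx
  have hcompl : IsCompl V₁ V₂ := hV₁' ▸ hV₂' ▸ b.isCompl_span_pairedRows hi _
  refine ⟨hcompl, fun h => ?_, ?_, ?_, ?_, ?_⟩
  · refine b.span_image_ne_top (s := Sigma.fst ⁻¹' {i₀})
      (i := ⟨i₁, ⟨0, by simp [i₁]; omega⟩⟩) hi.symm ?_
    exact hV₂' ▸ eq_top_of_isCompl_bot (h ▸ hcompl).symm
  · rw [hV₂, Submodule.ne_bot_iff]
    exact ⟨_, subset_span ⟨⟨0, by omega⟩, rfl⟩, b.ne_zero _⟩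
  · rw [hV₁', span_union, ← Module.End.mem_invtSubmodule_iff_forall_mem_of_mem]
    exact Module.End.invtSubmodule.sup_mem (hJ.span_rows_mem_invtSubmodule _)
      (hJ.span_pairedRows_mem_invtSubmodule (i₀ := i₀) (i₁ := i₁) hαβ)
  · rw [hV₂', ← Module.End.mem_invtSubmodule_iff_forall_mem_of_mem]
    exact hJ.span_rows_mem_invtSubmodule _
  · rw [hv, hV₁']
    exact b.sum_top_mem_span_pairedRows hi heq hne hαβ
end

section
/- Let 0 = W_0 ⊂ W_1 ⊂ … ⊂ W_m = V be a partial flag with x(W_i) ⊆ W_{i−1} and v ∈ W_j, let W = W_1 (so W_1 ⊆ ker x), and let V̄ = V/W with induced nilpotent x̄ and v̄ the image of v (if j ≥ 1). Then the images W̄_i = W_i/W for 2 ≤ i ≤ m form a partial flag in V̄ with x̄(W̄_i) ⊆ W̄_{i−1}, dim W̄_i = dim W_i − dim W_1, and v̄ ∈ W̄_j. Conversely, this construction gives a bijection between partial flags of type ρ through W_1 = W satisfying the conditions and partial flags of the quotient type ρ̄ in V̄ satisfying the corresponding conditions. -/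
/-!
By the correspondence theorem, `U ↦ (0, π⁻¹ U₀, π⁻¹ U₁, …)` (with `π : V → V ⧸ W`) inverts
`E ↦ (E (i + 1) / W)ᵢ` on chains with `E 1 = W`. Taking preimages under `π` is an order
isomorphism onto the subspaces containing `W`, adds `dim W` to every dimension and intertwines
`x̄` with `x`, so each flag condition on `U` is the corresponding condition on its preimage; the
one condition without a counterpart, `x (E 1) ⊆ E 0 = 0`, is `W ⊆ ker x`.
-/

open Module Submodule

section AdaptedFlag

variable {K V : Type*} [DivisionRing K] [AddCommGroup V] [Module K V]

def IsAdaptedFlag (x : Module.End K V) (v : V) (m j : ℕ) (r : ℕ → ℕ)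
    (E : ℕ → Submodule K V) : Prop :=
  E 0 = ⊥ ∧ (∀ i, m ≤ i → E i = ⊤) ∧ (∀ i, i < m → E i ≤ E (i + 1))
    ∧ (∀ i, i ≤ m → finrank K (E i) = r i) ∧ (∀ i, i < m → (E (i + 1)).map x ≤ E i) ∧ v ∈ E j

theorem IsAdaptedFlag.monotone {x : Module.End K V} {v : V} {m j : ℕ} {r : ℕ → ℕ}
    {E : ℕ → Submodule K V} (hE : IsAdaptedFlag x v m j r E) : Monotone E := by
  obtain ⟨-, htop, hle, -⟩ := hE
  refine monotone_nat_of_le_succ fun i => ?_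
  rcases lt_or_ge i m with hi | hi
  · exact hle i hi
  · rw [htop (i + 1) (by omega)]
    exact le_top

end AdaptedFlag

namespace Submodule

variable {K V : Type*} [DivisionRing K] [AddCommGroup V] [Module K V] {W : Submodule K V}

theorem comap_mkQ_injective (W : Submodule K V) : Function.Injective (comap W.mkQ) :=
  comap_injective_of_surjective W.mkQ_surjective

theorem comap_mkQ_eq_self_iff {U : Submodule K (V ⧸ W)} : U.comap W.mkQ = W ↔ U = ⊥ := by
  rw [← (comap_mkQ_injective W).eq_iff, comap_bot, ker_mkQ]

theorem comap_mkQ_eq_top_iff {U : Submodule K (V ⧸ W)} : U.comap W.mkQ = ⊤ ↔ U = ⊤ := by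
  rw [← (comap_mkQ_injective W).eq_iff, comap_top]

theorem finrank_comap_mkQ [FiniteDimensional K V] (U : Submodule K (V ⧸ W)) :
    finrank K (U.comap W.mkQ) = finrank K U + finrank K W := by
  set S := U.comap W.mkQ
  have h := LinearMap.finrank_range_add_finrank_ker (W.mkQ ∘ₗ S.subtype)
  rwa [LinearMap.range_comp, range_subtype, map_comap_eq_of_surjective W.mkQ_surjective,
    LinearMap.ker_comp, ker_mkQ, (comapSubtypeEquivOfLe (W.le_comap_mkQ U)).finrank_eq,
    eq_comm] at h

variable {x : Module.End K V} {xbar : Module.End K (V ⧸ W)} {v : V} {m j : ℕ} {r : ℕ → ℕ}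

theorem map_comap_mkQ_le_comap_mkQ_iff (hxbar : xbar ∘ₗ W.mkQ = W.mkQ ∘ₗ x)
    {U U' : Submodule K (V ⧸ W)} :
    (U.comap W.mkQ).map x ≤ U'.comap W.mkQ ↔ U.map xbar ≤ U' := by
  rw [map_le_iff_le_comap, map_le_iff_le_comap, ← comap_comp, ← hxbar, comap_comp,
    comap_le_comap_iff_of_surjective W.mkQ_surjective]

def flagComapMkQ (W : Submodule K V) (U : ℕ → Submodule K (V ⧸ W)) : ℕ → Submodule K V
  | 0 => ⊥
  | k + 1 => (U k).comap W.mkQ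

section flagComapMkQ

variable (U : ℕ → Submodule K (V ⧸ W))

@[simp]
theorem flagComapMkQ_zero : flagComapMkQ W U 0 = ⊥ := rfl

@[simp]
theorem flagComapMkQ_succ (k : ℕ) : flagComapMkQ W U (k + 1) = (U k).comap W.mkQ := rfl

theorem map_mkQ_flagComapMkQ : (fun i => (flagComapMkQ W U (i + 1)).map W.mkQ) = U :=
  funext fun i => map_comap_eq_of_surjective W.mkQ_surjective (U i)

theorem flagComapMkQ_map_mkQ {E : ℕ → Submodule K V} (hE : IsAdaptedFlag x v m j r E)
    (hE1 : E 1 = W) : flagComapMkQ W (fun i => (E (i + 1)).map W.mkQ) = E := by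
  funext i
  cases i with
  | zero => exact hE.1.symm
  | succ k =>
    rw [flagComapMkQ_succ, comap_map_mkQ, sup_eq_right, ← hE1]
    exact hE.monotone (by omega)

theorem flagComapMkQ_eq_top_iff :
    (∀ i, m + 1 ≤ i → flagComapMkQ W U i = ⊤) ↔ ∀ i, m ≤ i → U i = ⊤ := by
  refine ⟨fun h i hi => comap_mkQ_eq_top_iff.mp (h (i + 1) (by omega)), fun h i hi => ?_⟩
  obtain ⟨k, rfl⟩ := Nat.exists_eq_add_one.mpr (by omega : 0 < i)
  exact comap_mkQ_eq_top_iff.mpr (h k (by omega))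

theorem flagComapMkQ_le_succ_iff :
    (∀ i < m + 1, flagComapMkQ W U i ≤ flagComapMkQ W U (i + 1)) ↔ ∀ i < m, U i ≤ U (i + 1) := by
  simp only [Nat.forall_lt_succ_left, flagComapMkQ_zero, flagComapMkQ_succ, bot_le, true_and,
    comap_le_comap_iff_of_surjective W.mkQ_surjective]

theorem finrank_flagComapMkQ_iff [FiniteDimensional K V] (hWdim : finrank K W = r 1)
    (hr0 : r 0 = 0) (hr : MonotoneOn r (Set.Iic (m + 1))) :
    (∀ i ≤ m + 1, finrank K (flagComapMkQ W U i) = r i) ↔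
      ∀ i ≤ m, finrank K (U i) = r (i + 1) - r 1 := by
  have hr1 : ∀ i ≤ m, r 1 ≤ r (i + 1) := fun i hi =>
    hr (show 1 ∈ Set.Iic (m + 1) by simp) (show i + 1 ∈ Set.Iic (m + 1) by simp [hi]) (by omega)
  constructor
  · intro h i hi
    have hi' := h (i + 1) (by omega)
    rw [flagComapMkQ_succ, finrank_comap_mkQ, hWdim] at hi'
    have := hr1 i hi
    omega
  · rintro h (_ | i) hi
    · rw [flagComapMkQ_zero, finrank_bot, hr0]
    · rw [flagComapMkQ_succ, finrank_comap_mkQ, hWdim, h i (by omega)]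
      have := hr1 i (by omega)
      omega

theorem map_flagComapMkQ_le_iff (hxbar : xbar ∘ₗ W.mkQ = W.mkQ ∘ₗ x)
    (hWker : W ≤ LinearMap.ker x) (h0 : U 0 = ⊥) :
    (∀ i < m + 1, (flagComapMkQ W U (i + 1)).map x ≤ flagComapMkQ W U i) ↔
      ∀ i < m, (U (i + 1)).map xbar ≤ U i := by
  simp only [Nat.forall_lt_succ_left, flagComapMkQ_zero, flagComapMkQ_succ,
    map_comap_mkQ_le_comap_mkQ_iff hxbar, h0, comap_bot, ker_mkQ, and_iff_right_iff_imp]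
  exact fun _ => by rwa [map_le_iff_le_comap, comap_bot]

theorem isAdaptedFlag_flagComapMkQ_iff [FiniteDimensional K V]
    (hxbar : xbar ∘ₗ W.mkQ = W.mkQ ∘ₗ x) (hWker : W ≤ LinearMap.ker x)
    (hWdim : finrank K W = r 1) (hr0 : r 0 = 0) (hr : MonotoneOn r (Set.Iic (m + 1))) :
    IsAdaptedFlag x v (m + 1) (j + 1) r (flagComapMkQ W U) ∧ flagComapMkQ W U 1 = W ↔
      IsAdaptedFlag xbar (Quotient.mk v) m j (fun i => r (i + 1) - r 1) U := by
  rw [IsAdaptedFlag, IsAdaptedFlag, flagComapMkQ_eq_top_iff, flagComapMkQ_le_succ_iff,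
    finrank_flagComapMkQ_iff U hWdim hr0 hr, flagComapMkQ_succ, flagComapMkQ_succ,
    comap_mkQ_eq_self_iff]
  constructor
  · rintro ⟨⟨-, htop, hle, hdim, hact, hv⟩, h0⟩
    exact ⟨h0, htop, hle, hdim, (map_flagComapMkQ_le_iff U hxbar hWker h0).mp hact, hv⟩
  · rintro ⟨h0, htop, hle, hdim, hact, hv⟩
    exact ⟨⟨rfl, htop, hle, hdim, (map_flagComapMkQ_le_iff U hxbar hWker h0).mpr hact, hv⟩, h0⟩

end flagComapMkQ

theorem bijOn_map_mkQ_isAdaptedFlag [FiniteDimensional K V]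
    (hxbar : xbar ∘ₗ W.mkQ = W.mkQ ∘ₗ x) (hWker : W ≤ LinearMap.ker x)
    (hWdim : finrank K W = r 1) (hr0 : r 0 = 0) (hr : MonotoneOn r (Set.Iic (m + 1))) :
    Set.BijOn (fun E i => (E (i + 1)).map W.mkQ)
      {E | IsAdaptedFlag x v (m + 1) (j + 1) r E ∧ E 1 = W}
      {U | IsAdaptedFlag xbar (Quotient.mk v) m j (fun i => r (i + 1) - r 1) U} := by
  have hiff := fun U => isAdaptedFlag_flagComapMkQ_iff (v := v) (j := j) U hxbar hWker hWdim hr0 hr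
  refine Set.InvOn.bijOn (f' := flagComapMkQ W)
    ⟨fun E hE => flagComapMkQ_map_mkQ hE.1 hE.2, fun U _ => map_mkQ_flagComapMkQ U⟩
    (fun E hE => ?_) (fun U hU => (hiff U).mpr hU)
  rw [Set.mem_ofPred_eq, ← hiff, flagComapMkQ_map_mkQ hE.1 hE.2]
  exact hE

end Submodule

theorem quotient_flag_bijection_general
    (F : Type) [Field F] (V : Type) [AddCommGroup V] [Module F V] [FiniteDimensional F V]
    (x : Module.End F V) (v : V)
    (m : ℕ) (hm : 1 ≤ m) (r : ℕ → ℕ) (hr0 : r 0 = 0)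
    (hr : ∀ i, i < m → r i < r (i + 1))
    (j : ℕ) (hj1 : 1 ≤ j)
    (W : Submodule F V) (hWker : W ≤ LinearMap.ker x)
    (hWdim : Module.finrank F W = r 1)
    (xbar : Module.End F (V ⧸ W))
    (hxbar : ∀ u : V, xbar (Submodule.Quotient.mk u) = Submodule.Quotient.mk (x u)) :
    Set.BijOn (fun (Wc : ℕ → Submodule F V) => fun i : ℕ => Submodule.map W.mkQ (Wc (i + 1)))
      {Wc : ℕ → Submodule F V |
        Wc 0 = ⊥ ∧ (∀ i, m ≤ i → Wc i = ⊤) ∧ Wc 1 = W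
        ∧ (∀ i, i < m → Wc i ≤ Wc (i + 1))
        ∧ (∀ i, i ≤ m → Module.finrank F (Wc i) = r i)
        ∧ (∀ i, i < m → Submodule.map x (Wc (i + 1)) ≤ Wc i)
        ∧ v ∈ Wc j}
      {U : ℕ → Submodule F (V ⧸ W) |
        U 0 = ⊥ ∧ (∀ i, m - 1 ≤ i → U i = ⊤)
        ∧ (∀ i, i < m - 1 → U i ≤ U (i + 1))
        ∧ (∀ i, i ≤ m - 1 → Module.finrank F (U i) = r (i + 1) - r 1)
        ∧ (∀ i, i < m - 1 → Submodule.map xbar (U (i + 1)) ≤ U i)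
        ∧ Submodule.Quotient.mk v ∈ U (j - 1)} := by
  obtain ⟨m, rfl⟩ : ∃ k, m = k + 1 := ⟨m - 1, by omega⟩
  obtain ⟨j, rfl⟩ : ∃ k, j = k + 1 := ⟨j - 1, by omega⟩
  have hr_mono : MonotoneOn r (Set.Iic (m + 1)) := (strictMonoOn_Iic_of_lt_succ hr).monotoneOn
  convert bijOn_map_mkQ_isAdaptedFlag (v := v) (LinearMap.ext hxbar) hWker hWdim hr0 hr_mono
    using 1
  · ext E
    simp only [IsAdaptedFlag, Set.mem_ofPred_eq]
    tauto
  · simp only [IsAdaptedFlag, Nat.add_sub_cancel]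

/-- Let `x` be nilpotent, `v ∈ V`, `ρ : 0 = r 0 < … < r m = n` a dimension
sequence, `1 ≤ j ≤ m`, and `W ⊆ ker x` a fixed `r 1`-dimensional subspace with induced
endomorphism `x̄` of `V̄ = V/W` and `v̄` the image of `v`.  Sending a flag
`0 = W_0 ⊂ W_1 ⊂ … ⊂ W_m = V` of type `ρ` with `W_1 = W`, `x W_i ⊆ W_{i-1}` and
`v ∈ W_j` to the flag `W̄_i = W_{i+1}/W` gives a bijection onto the set of flags
`0 = Ū_0 ⊂ … ⊂ Ū_{m-1} = V̄` with `dim Ū_i = r (i+1) - r 1`, `x̄ Ū_i ⊆ Ū_{i-1}` and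
`v̄ ∈ Ū_{j-1}`. -/
theorem quotient_flag_bijection
    (F : Type) [Field F] (V : Type) [AddCommGroup V] [Module F V] [FiniteDimensional F V]
    (n : ℕ) (hn : Module.finrank F V = n)
    (x : Module.End F V) (hnil : IsNilpotent x) (v : V)
    (m : ℕ) (hm : 1 ≤ m) (r : ℕ → ℕ) (hr0 : r 0 = 0) (hrm : r m = n)
    (hr : ∀ i, i < m → r i < r (i + 1))
    (j : ℕ) (hj1 : 1 ≤ j) (hjm : j ≤ m)
    (W : Submodule F V) (hWker : W ≤ LinearMap.ker x)
    (hWdim : Module.finrank F W = r 1)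
    (xbar : Module.End F (V ⧸ W))
    (hxbar : ∀ u : V, xbar (Submodule.Quotient.mk u) = Submodule.Quotient.mk (x u)) :
    Set.BijOn (fun (Wc : ℕ → Submodule F V) => fun i : ℕ => Submodule.map W.mkQ (Wc (i + 1)))
      {Wc : ℕ → Submodule F V |
        Wc 0 = ⊥ ∧ (∀ i, m ≤ i → Wc i = ⊤) ∧ Wc 1 = W
        ∧ (∀ i, i < m → Wc i ≤ Wc (i + 1))
        ∧ (∀ i, i ≤ m → Module.finrank F (Wc i) = r i)
        ∧ (∀ i, i < m → Submodule.map x (Wc (i + 1)) ≤ Wc i)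
        ∧ v ∈ Wc j}
      {U : ℕ → Submodule F (V ⧸ W) |
        U 0 = ⊥ ∧ (∀ i, m - 1 ≤ i → U i = ⊤)
        ∧ (∀ i, i < m - 1 → U i ≤ U (i + 1))
        ∧ (∀ i, i ≤ m - 1 → Module.finrank F (U i) = r (i + 1) - r 1)
        ∧ (∀ i, i < m - 1 → Submodule.map xbar (U (i + 1)) ≤ U i)
        ∧ Submodule.Quotient.mk v ∈ U (j - 1)} :=
  quotient_flag_bijection_general F V x v m hm r hr0 hr j hj1 W hWker hWdim xbar hxbar
end
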